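/- Mellin transform of the NIG Bessel kernel: for all a > 0, b > 0 and s ∈ ℂ with Re(s) > 0, ∫₀^∞ x^{s−1} · K₁(a√(x² + b²)) / √(x² + b²) dx = 2^{s/2 − 1} a^{−s/2} b^{s/2 − 1} Γ(s/2) K_{1 − s/2}(ab). -/

import Mathlib

/-!
By the integral representation of `K_ν`, the kernel `K_ν(a√(x² + b²)) / √(x² + b²)^ν`
equals `(a/2)^ν / 2 · ∫₀^∞ exp(-a²x²/(4t)) exp(-t - (ab)²/(4t)) t^(-ν-1) dt`, a mixture of
Gaussians in `x`. Swapping the integrals (absolute convergence is the same computation with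
`Re s` in place of `s`), the Mellin transform of `exp(-a²x²/(4t))` is
`Γ(s/2) (4t/a²)^(s/2) / 2`. The factor `t^(s/2)` turns `t^(-ν-1)` into `t^(-(ν - s/2)-1)`,
so the remaining `t`-integral is `K_(ν - s/2)(ab)` up to an explicit power of `ab/2`.
-/

open MeasureTheory

/-- Modified Bessel function of the second kind, complex index `ν`, real argument `z`. -/
noncomputable def besselK (ν : ℂ) (z : ℝ) : ℂ :=
  (1 / 2) * ((z : ℂ) / 2) ^ ν *
    ∫ t in Set.Ioi (0 : ℝ), Complex.exp (-(t : ℂ) - (z : ℂ) ^ 2 / (4 * (t : ℂ))) *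
      (t : ℂ) ^ (-ν - 1)

open Set

theorem besselK_eq_integral_exp_neg_sub_div (ν : ℂ) (z : ℝ) :
    besselK ν z = 1 / 2 * ((z : ℂ) / 2) ^ ν *
      ∫ t in Ioi (0 : ℝ), (Real.exp (-t - z ^ 2 / 4 / t) : ℂ) * (t : ℂ) ^ (-ν - 1) := by
  simp only [besselK, Complex.ofReal_exp, div_div]
  push_cast
  rfl

theorem Complex.ofReal_cpow_eq_exp_log_mul {r : ℝ} (hr : 0 < r) (w : ℂ) :
    (r : ℂ) ^ w = Complex.exp (Real.log r * w) := by
  rw [Complex.cpow_def_of_ne_zero (Complex.ofReal_ne_zero.mpr hr.ne'), Complex.ofReal_log hr.le]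

theorem Real.exp_neg_le_factorial_div_pow {x : ℝ} (hx : 0 < x) (n : ℕ) :
    Real.exp (-x) ≤ n.factorial / x ^ n := by
  rw [Real.exp_neg, ← inv_div]
  exact inv_anti₀ (by positivity) (Real.pow_div_factorial_le_exp x hx.le n)

theorem integrableOn_exp_neg_sub_div_mul_cpow {d : ℝ} (hd : 0 < d) (μ : ℂ) :
    IntegrableOn (fun t : ℝ => (Real.exp (-t - d / t) : ℂ) * (t : ℂ) ^ μ) (Ioi 0) := by
  obtain ⟨n, hn⟩ := exists_nat_gt (-μ.re)
  have hbound := (Real.GammaIntegral_convergent (s := μ.re + n + 1) (by linarith)).const_mul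
    (n.factorial / d ^ n)
  refine hbound.mono' ?_ ?_
  · refine ContinuousOn.aestronglyMeasurable (fun t (ht : 0 < t) => ?_) measurableSet_Ioi
    refine ContinuousAt.continuousWithinAt ?_
    have := Complex.continuousAt_ofReal_cpow_const t μ (Or.inr ht.ne')
    fun_prop (disch := exact ht.ne')
  · refine (ae_restrict_iff' measurableSet_Ioi).mpr
      (Filter.Eventually.of_forall fun t (ht : 0 < t) => ?_)
    have hexp : Real.exp (-(d / t)) ≤ n.factorial / d ^ n * t ^ n := by
      calc Real.exp (-(d / t)) ≤ n.factorial / (d / t) ^ n :=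
            Real.exp_neg_le_factorial_div_pow (by positivity) n
        _ = n.factorial / d ^ n * t ^ n := by rw [div_pow]; field_simp
    rw [norm_mul, Complex.norm_real, Real.norm_of_nonneg (Real.exp_pos _).le,
      Complex.norm_cpow_eq_rpow_re_of_pos ht, add_sub_cancel_right, Real.rpow_add ht,
      Real.rpow_natCast, sub_eq_add_neg, Real.exp_add]
    calc Real.exp (-t) * Real.exp (-(d / t)) * t ^ μ.re
        ≤ Real.exp (-t) * (n.factorial / d ^ n * t ^ n) * t ^ μ.re := by gcongr
      _ = _ := by ring

theorem mellinConvergent_exp_neg_mul_sq {c : ℝ} (hc : 0 < c) {s : ℂ} (hs : 0 < s.re) :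
    MellinConvergent (fun x : ℝ => (Real.exp (-c * x ^ 2) : ℂ)) s := by
  have hs2 : 0 < (s / 2).re := by rw [Complex.div_ofNat_re]; positivity
  have hGamma : MellinConvergent (fun u : ℝ => (Real.exp (-u) : ℂ)) (s / (2 : ℝ)) := by
    simpa only [MellinConvergent, smul_eq_mul, mul_comm, Complex.ofReal_ofNat]
      using Complex.GammaIntegral_convergent hs2
  have := (MellinConvergent.comp_rpow two_ne_zero).mpr
    ((MellinConvergent.comp_mul_left hc).mpr hGamma)
  simpa only [Real.rpow_two, neg_mul] using this

theorem mellin_exp_neg_mul_sq {c : ℝ} (hc : 0 < c) {s : ℂ} (hs : 0 < s.re) :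
    mellin (fun x : ℝ => (Real.exp (-c * x ^ 2) : ℂ)) s =
      (1 / c : ℂ) ^ (s / 2) * Complex.Gamma (s / 2) / 2 := by
  have hs2 : 0 < (s / 2).re := by rw [Complex.div_ofNat_re]; positivity
  have := mellin_comp_rpow (fun u : ℝ => (Real.exp (-(c * u)) : ℂ)) s 2
  simp only [Real.rpow_two] at this
  simp only [neg_mul]
  rw [this, mellin]
  simp only [smul_eq_mul, Complex.ofReal_exp, Complex.ofReal_neg, Complex.ofReal_mul,
    Complex.ofReal_ofNat]
  rw [Complex.integral_cpow_mul_exp_neg_mul_Ioi hs2 hc]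
  norm_num
  ring

theorem integral_norm_cpow_mul_exp_neg_mul_sq {c : ℝ} (hc : 0 < c) {s : ℂ} (hs : 0 < s.re) :
    ∫ x in Ioi (0 : ℝ), ‖(x : ℂ) ^ (s - 1) * Real.exp (-c * x ^ 2)‖ =
      c ^ (-s.re / 2) * (1 / 2) * Real.Gamma (s.re / 2) := by
  have hpt : ∀ x ∈ Ioi (0 : ℝ),
      ‖(x : ℂ) ^ (s - 1) * Real.exp (-c * x ^ 2)‖ =
        x ^ (s.re - 1) * Real.exp (-c * x ^ (2 : ℝ)) := by
    intro x (hx : 0 < x)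
    rw [Real.rpow_two, norm_mul, Complex.norm_cpow_eq_rpow_re_of_pos hx, Complex.norm_real,
      Real.norm_of_nonneg (Real.exp_pos _).le, Complex.sub_re, Complex.one_re]
  rw [setIntegral_congr_fun measurableSet_Ioi hpt,
    integral_rpow_mul_exp_neg_mul_rpow two_pos (by linarith) hc, sub_add_cancel]

theorem integral_cpow_mul_integral_exp_neg_div_mul_sq {κ : ℝ} (hκ : 0 < κ) {s : ℂ}
    (hs : 0 < s.re) {w : ℝ → ℂ} (hw_meas : AEStronglyMeasurable w (volume.restrict (Ioi 0)))
    (hw : IntegrableOn (fun t : ℝ => (t : ℂ) ^ (s / 2) * w t) (Ioi 0)) :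
    ∫ x in Ioi (0 : ℝ), (x : ℂ) ^ (s - 1) *
        ∫ t in Ioi (0 : ℝ), Real.exp (-(κ / t) * x ^ 2) * w t =
      (1 / κ : ℂ) ^ (s / 2) * Complex.Gamma (s / 2) / 2 *
        ∫ t in Ioi (0 : ℝ), (t : ℂ) ^ (s / 2) * w t := by
  set F : ℝ → ℝ → ℂ := fun x t => (x : ℂ) ^ (s - 1) * Real.exp (-(κ / t) * x ^ 2) * w t
    with hF
  have hsection : ∀ t ∈ Ioi (0 : ℝ), Integrable (fun x => F x t) (volume.restrict (Ioi 0)) :=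
    fun t (ht : 0 < t) => (mellinConvergent_exp_neg_mul_sq (div_pos hκ ht) hs).mul_const (w t)
  have hsection_integral : ∀ t ∈ Ioi (0 : ℝ), ∫ x in Ioi (0 : ℝ), F x t =
      (1 / κ : ℂ) ^ (s / 2) * Complex.Gamma (s / 2) / 2 * ((t : ℂ) ^ (s / 2) * w t) := by
    intro t (ht : 0 < t)
    have hscale : (1 / ((κ / t : ℝ) : ℂ)) = ((1 / κ : ℝ) : ℂ) * (t : ℂ) := by
      push_cast; field_simp
    have hgauss := mellin_exp_neg_mul_sq (div_pos hκ ht) hs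
    simp only [mellin, smul_eq_mul] at hgauss
    rw [integral_mul_const, hgauss, hscale, Complex.mul_cpow_ofReal_nonneg (by positivity) ht.le]
    push_cast
    ring
  have hnorm_integral : ∀ t ∈ Ioi (0 : ℝ), ∫ x in Ioi (0 : ℝ), ‖F x t‖ =
      κ ^ (-s.re / 2) * (1 / 2) * Real.Gamma (s.re / 2) * ‖(t : ℂ) ^ (s / 2) * w t‖ := by
    intro t (ht : 0 < t)
    simp only [hF, norm_mul (_ * _) (w t)]
    rw [integral_mul_const, integral_norm_cpow_mul_exp_neg_mul_sq (div_pos hκ ht) hs, norm_mul,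
      Complex.norm_cpow_eq_rpow_re_of_pos ht, Complex.div_ofNat_re, Real.div_rpow hκ.le ht.le,
      neg_div, Real.rpow_neg ht.le, div_inv_eq_mul]
    ring
  have hmeas : AEStronglyMeasurable (Function.uncurry F)
      ((volume.restrict (Ioi 0)).prod (volume.restrict (Ioi 0))) := by
    refine AEStronglyMeasurable.mul ?_ hw_meas.comp_snd
    rw [Measure.prod_restrict]
    refine ContinuousOn.aestronglyMeasurable (fun p hp => ?_)
      (measurableSet_Ioi.prod measurableSet_Ioi)
    obtain ⟨hx, ht⟩ : 0 < p.1 ∧ 0 < p.2 := hp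
    refine ContinuousAt.continuousWithinAt ?_
    have := (Complex.continuousAt_ofReal_cpow_const p.1 (s - 1) (Or.inr hx.ne')).comp
      continuousAt_fst
    fun_prop (disch := exact ht.ne')
  have hint : Integrable (Function.uncurry F)
      ((volume.restrict (Ioi 0)).prod (volume.restrict (Ioi 0))) := by
    refine (integrable_prod_iff' hmeas).mpr ⟨(ae_restrict_iff' measurableSet_Ioi).mpr
      (Filter.Eventually.of_forall hsection), ?_⟩
    refine (hw.norm.const_mul _).congr ((ae_restrict_iff' measurableSet_Ioi).mpr
      (Filter.Eventually.of_forall fun t ht => (hnorm_integral t ht).symm))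
  calc _ = ∫ x in Ioi (0 : ℝ), ∫ t in Ioi (0 : ℝ), F x t := by
        simp only [hF, mul_assoc, integral_const_mul]
    _ = ∫ t in Ioi (0 : ℝ), ∫ x in Ioi (0 : ℝ), F x t := integral_integral_swap hint
    _ = _ := by rw [setIntegral_congr_fun measurableSet_Ioi hsection_integral, integral_const_mul]

theorem besselK_mul_sqrt_sq_add_sq_div_cpow {a b : ℝ} (ha : 0 ≤ a) (hb : b ≠ 0) (ν : ℂ)
    (x : ℝ) :
    besselK ν (a * √(x ^ 2 + b ^ 2)) / (√(x ^ 2 + b ^ 2) : ℂ) ^ ν =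
      ((a / 2 : ℝ) : ℂ) ^ ν / 2 * ∫ t in Ioi (0 : ℝ), Real.exp (-(a ^ 2 / 4 / t) * x ^ 2) *
        ((Real.exp (-t - (a * b) ^ 2 / 4 / t) : ℂ) * (t : ℂ) ^ (-ν - 1)) := by
  have hq : 0 < √(x ^ 2 + b ^ 2) := by positivity
  have hqν : (√(x ^ 2 + b ^ 2) : ℂ) ^ ν ≠ 0 := fun h =>
    hq.ne' (by exact_mod_cast ((Complex.cpow_eq_zero_iff _ _).mp h).1)
  have hsplit : ∀ t : ℝ, Real.exp (-t - (a * √(x ^ 2 + b ^ 2)) ^ 2 / 4 / t) =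
      Real.exp (-(a ^ 2 / 4 / t) * x ^ 2) * Real.exp (-t - (a * b) ^ 2 / 4 / t) := by
    intro t
    rw [← Real.exp_add, mul_pow, Real.sq_sqrt (by positivity)]
    congr 1
    ring
  rw [besselK_eq_integral_exp_neg_sub_div, show ((a * √(x ^ 2 + b ^ 2) : ℝ) : ℂ) / 2 =
    ((a / 2 : ℝ) : ℂ) * (√(x ^ 2 + b ^ 2) : ℂ) by push_cast; ring,
    Complex.mul_cpow_ofReal_nonneg (by positivity) hq.le]
  simp only [hsplit, Complex.ofReal_mul, mul_assoc]
  field_simp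

theorem div_two_cpow_mul_four_div_sq_cpow {a b : ℝ} (ha : 0 < a) (hb : 0 < b) (ν s : ℂ) :
    ((a / 2 : ℝ) : ℂ) ^ ν * ((4 / a ^ 2 : ℝ) : ℂ) ^ (s / 2) =
      (2 : ℂ) ^ (s / 2) * (a : ℂ) ^ (-(s / 2)) * (b : ℂ) ^ (s / 2 - ν) *
        ((a * b / 2 : ℝ) : ℂ) ^ (ν - s / 2) := by
  rw [Complex.ofReal_cpow_eq_exp_log_mul (by positivity : 0 < a / 2),
    Complex.ofReal_cpow_eq_exp_log_mul (by positivity : 0 < 4 / a ^ 2),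
    ← Complex.ofReal_ofNat, Complex.ofReal_cpow_eq_exp_log_mul two_pos,
    Complex.ofReal_cpow_eq_exp_log_mul ha, Complex.ofReal_cpow_eq_exp_log_mul hb,
    Complex.ofReal_cpow_eq_exp_log_mul (by positivity : 0 < a * b / 2),
    ← Complex.exp_add, ← Complex.exp_add, ← Complex.exp_add, ← Complex.exp_add]
  congr 1
  rw [Real.log_div (by positivity) two_ne_zero, Real.log_div four_ne_zero (by positivity),
    Real.log_div (by positivity) two_ne_zero, Real.log_mul ha.ne' hb.ne', Real.log_pow,
    show (4 : ℝ) = 2 ^ 2 by norm_num, Real.log_pow]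
  push_cast
  ring

theorem integral_cpow_mul_besselK_mul_sqrt_sq_add_sq_div_cpow {a b : ℝ} (ha : 0 < a) (hb : 0 < b)
    (ν : ℂ) {s : ℂ} (hs : 0 < s.re) :
    ∫ x in Ioi (0 : ℝ), (x : ℂ) ^ (s - 1) * besselK ν (a * √(x ^ 2 + b ^ 2)) /
        (√(x ^ 2 + b ^ 2) : ℂ) ^ ν =
      2 ^ (s / 2 - 1) * (a : ℂ) ^ (-(s / 2)) * (b : ℂ) ^ (s / 2 - ν) * Complex.Gamma (s / 2) *
        besselK (ν - s / 2) (a * b) := by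
  have hd : 0 < (a * b) ^ 2 / 4 := by positivity
  set w : ℝ → ℂ := fun t =>
    (Real.exp (-t - (a * b) ^ 2 / 4 / t) : ℂ) * (t : ℂ) ^ (-ν - 1)
  have hshift : ∀ t ∈ Ioi (0 : ℝ), (t : ℂ) ^ (s / 2) * w t =
      (Real.exp (-t - (a * b) ^ 2 / 4 / t) : ℂ) * (t : ℂ) ^ (-(ν - s / 2) - 1) := by
    intro t (ht : 0 < t)
    rw [mul_left_comm, ← Complex.cpow_add _ _ (Complex.ofReal_ne_zero.mpr ht.ne')]
    congr 2
    ring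
  have hshift_int : IntegrableOn (fun t : ℝ => (t : ℂ) ^ (s / 2) * w t) (Ioi 0) :=
    (integrableOn_exp_neg_sub_div_mul_cpow hd _).congr_fun (fun t ht => (hshift t ht).symm)
      measurableSet_Ioi
  have hconst : ((a / 2 : ℝ) : ℂ) ^ ν / 2 * ((1 / ((a ^ 2 / 4 : ℝ) : ℂ)) ^ (s / 2) / 2) =
      2 ^ (s / 2 - 1) * (a : ℂ) ^ (-(s / 2)) * (b : ℂ) ^ (s / 2 - ν) *
        (1 / 2 * (((a * b : ℝ) : ℂ) / 2) ^ (ν - s / 2)) := by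
    rw [show (1 / ((a ^ 2 / 4 : ℝ) : ℂ)) = ((4 / a ^ 2 : ℝ) : ℂ) by push_cast; field_simp,
      show ((a * b : ℝ) : ℂ) / 2 = ((a * b / 2 : ℝ) : ℂ) by push_cast; ring,
      Complex.cpow_sub _ _ two_ne_zero, Complex.cpow_one]
    linear_combination div_two_cpow_mul_four_div_sq_cpow ha hb ν s / 4
  calc _ = ∫ x in Ioi (0 : ℝ), ((a / 2 : ℝ) : ℂ) ^ ν / 2 * ((x : ℂ) ^ (s - 1) *
          ∫ t in Ioi (0 : ℝ), Real.exp (-(a ^ 2 / 4 / t) * x ^ 2) * w t) := by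
        congr 1 with x
        rw [mul_div_assoc, besselK_mul_sqrt_sq_add_sq_div_cpow ha.le hb.ne', mul_left_comm]
    _ = ((a / 2 : ℝ) : ℂ) ^ ν / 2 * ((1 / ((a ^ 2 / 4 : ℝ) : ℂ)) ^ (s / 2) *
          Complex.Gamma (s / 2) / 2 * ∫ t in Ioi (0 : ℝ), (t : ℂ) ^ (s / 2) * w t) := by
        rw [integral_const_mul, integral_cpow_mul_integral_exp_neg_div_mul_sq (by positivity) hs
          (integrableOn_exp_neg_sub_div_mul_cpow hd _).aestronglyMeasurable hshift_int]
    _ = _ := by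
        rw [setIntegral_congr_fun measurableSet_Ioi hshift, besselK_eq_integral_exp_neg_sub_div]
        linear_combination (Complex.Gamma (s / 2) * ∫ t in Ioi (0 : ℝ),
          (Real.exp (-t - (a * b) ^ 2 / 4 / t) : ℂ) * (t : ℂ) ^ (-(ν - s / 2) - 1)) * hconst

/-- Mellin transform of the NIG Bessel kernel. -/
theorem mellin_transform_nig_bessel_kernel
    (a b : ℝ) (ha : 0 < a) (hb : 0 < b) (s : ℂ) (hs : 0 < s.re) :
    (∫ x in Set.Ioi (0 : ℝ),
        (x : ℂ) ^ (s - 1) * besselK 1 (a * Real.sqrt (x ^ 2 + b ^ 2)) /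
          (Real.sqrt (x ^ 2 + b ^ 2) : ℂ))
      = 2 ^ (s / 2 - 1) * (a : ℂ) ^ (-(s / 2)) * (b : ℂ) ^ (s / 2 - 1) *
          Complex.Gamma (s / 2) * besselK (1 - s / 2) (a * b) := by
  simpa only [Complex.cpow_one] using
    integral_cpow_mul_besselK_mul_sqrt_sq_add_sq_div_cpow ha hb 1 hs
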